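/- For repeated ERM under the Gaussian mean-shift model with θ₀ = 0 and constant sample size N per round, E‖θ_T - θ_PS‖² = ‖μ₀‖²·μ^{2T}/(1-μ)² + (dσ₀²/N)·(1-μ^{2T})/(1-μ²), where θ_PS = μ₀/(1-μ). -/

import Mathlib

/-!
Since `θ_PS` is the fixed point of `θ ↦ μ₀ + μ θ`, the deviation `θ_t - θ_PS` contracts by `μ`
and picks up the fresh noise each round, so `θ_T - θ_PS = -μ^T θ_PS + ∑_{j<T} μ^j Z_{T-j}`.
The deterministic term and the noise terms are pairwise orthogonal in `L²` (the noise has mean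
zero and is uncorrelated), so the second moment is `μ^{2T} ‖θ_PS‖²` plus the geometric series
`∑_{j<T} μ^{2j} dσ₀²/N`.
-/

open MeasureTheory Finset

section Affine

variable {R M : Type*} [CommRing R] [AddCommGroup M] [Module R M]

theorem affine_recursion_sub_fixedPoint (a : R) {c p : M} (hp : c + a • p = p) {x z : ℕ → M}
    (hx : ∀ t, x (t + 1) = c + a • x t + z (t + 1)) (n : ℕ) :
    x n - p = a ^ n • (x 0 - p) + ∑ j ∈ range n, a ^ j • z (n - j) := by
  induction n with
  | zero => simp
  | succ n ih =>
    have hstep : x (n + 1) - p = a • (x n - p) + z (n + 1) := by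
      conv_lhs => rw [hx, ← hp]
      rw [smul_sub]
      abel
    simp only [hstep, ih, sum_range_succ', pow_succ', mul_smul, smul_add, smul_sum,
      Nat.add_sub_add_right, pow_zero, one_smul, Nat.sub_zero]
    abel

end Affine

section SecondMoment

variable {Ω E : Type*} [MeasurableSpace Ω] {P : Measure Ω}
  [NormedAddCommGroup E] [InnerProductSpace ℝ E]

theorem MeasureTheory.MemLp.integrable_inner {f g : Ω → E} (hf : MemLp f 2 P)
    (hg : MemLp g 2 P) : Integrable (fun ω => inner ℝ (f ω) (g ω)) P := by
  refine (L2.integrable_inner (𝕜 := ℝ) (hf.toLp f) (hg.toLp g)).congr ?_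
  filter_upwards [hf.coeFn_toLp, hg.coeFn_toLp] with ω hfω hgω
  rw [hfω, hgω]

theorem integral_norm_sq_sum_of_uncorrelated {ι : Type*} (s : Finset ι) {f : ι → Ω → E}
    (hf : ∀ i ∈ s, MemLp (f i) 2 P)
    (huncorr : ∀ i ∈ s, ∀ j ∈ s, i ≠ j → ∫ ω, inner ℝ (f i ω) (f j ω) ∂P = 0) :
    ∫ ω, ‖∑ i ∈ s, f i ω‖ ^ 2 ∂P = ∑ i ∈ s, ∫ ω, ‖f i ω‖ ^ 2 ∂P := by
  have hint : ∀ i ∈ s, ∀ j ∈ s, Integrable (fun ω => inner ℝ (f i ω) (f j ω)) P :=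
    fun i hi j hj => (hf i hi).integrable_inner (hf j hj)
  simp_rw [← real_inner_self_eq_norm_sq, sum_inner, inner_sum]
  rw [integral_finsetSum _ fun i hi => integrable_finsetSum _ fun j hj => hint i hi j hj]
  refine sum_congr rfl fun i hi => ?_
  rw [integral_finsetSum _ fun j hj => hint i hi j hj,
    sum_eq_single_of_mem i hi fun j hj hji => huncorr i hi j hj hji.symm]

theorem integral_norm_sq_const_add [CompleteSpace E] [IsProbabilityMeasure P] (a : E) {f : Ω → E}
    (hf : MemLp f 2 P) (hmean : ∫ ω, f ω ∂P = 0) :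
    ∫ ω, ‖a + f ω‖ ^ 2 ∂P = ‖a‖ ^ 2 + ∫ ω, ‖f ω‖ ^ 2 ∂P := by
  have hf1 : Integrable f P := hf.integrable one_le_two
  have hcross : ∫ ω, inner ℝ a (f ω) ∂P = 0 := by
    rw [integral_inner hf1, hmean, inner_zero_right]
  have hcross_int : Integrable (fun ω => 2 * inner ℝ a (f ω)) P :=
    (hf1.const_inner a).const_mul 2
  have hlin_int : Integrable (fun ω => ‖a‖ ^ 2 + 2 * inner ℝ a (f ω)) P :=
    (integrable_const _).add hcross_int
  simp_rw [norm_add_sq_real]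
  rw [integral_add hlin_int hf.integrable_norm_pow',
    integral_add (integrable_const _) hcross_int, integral_const_mul, hcross]
  simp

theorem integral_norm_sq_const_add_sum_smul [CompleteSpace E] [IsProbabilityMeasure P] (a : E)
    {ι : Type*} (s : Finset ι) (w : ι → ℝ) {Z : ι → Ω → E} (hZ : ∀ i ∈ s, MemLp (Z i) 2 P)
    (hmean : ∀ i ∈ s, ∫ ω, Z i ω ∂P = 0)
    (huncorr : ∀ i ∈ s, ∀ j ∈ s, i ≠ j → ∫ ω, inner ℝ (Z i ω) (Z j ω) ∂P = 0) :
    ∫ ω, ‖a + ∑ i ∈ s, w i • Z i ω‖ ^ 2 ∂P = ‖a‖ ^ 2 + ∑ i ∈ s, w i ^ 2 * ∫ ω, ‖Z i ω‖ ^ 2 ∂P := by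
  have hwZ : ∀ i ∈ s, MemLp (fun ω => w i • Z i ω) 2 P := fun i hi => (hZ i hi).const_smul (w i)
  have hsum_mean : ∫ ω, ∑ i ∈ s, w i • Z i ω ∂P = 0 := by
    rw [integral_finsetSum _ fun i hi => (hwZ i hi).integrable one_le_two]
    exact sum_eq_zero fun i hi => by rw [integral_smul, hmean i hi, smul_zero]
  have hwZ_uncorr : ∀ i ∈ s, ∀ j ∈ s, i ≠ j →
      ∫ ω, inner ℝ (w i • Z i ω) (w j • Z j ω) ∂P = 0 := fun i hi j hj hij => by
    simp only [inner_smul_left, inner_smul_right, integral_const_mul, huncorr i hi j hj hij,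
      mul_zero]
  rw [integral_norm_sq_const_add a (memLp_finsetSum s hwZ) hsum_mean,
    integral_norm_sq_sum_of_uncorrelated s hwZ hwZ_uncorr]
  simp only [norm_smul, Real.norm_eq_abs, mul_pow, sq_abs, integral_const_mul]

end SecondMoment

theorem stmt10_general {Ω : Type*} [MeasureSpace Ω] [IsProbabilityMeasure (volume : Measure Ω)]
    {d : ℕ} (μ σ₀ : ℝ) (h0μ : 0 ≤ μ) (hμ : μ < 1)
    (N : ℕ)
    (μ₀ θPS : EuclideanSpace ℝ (Fin d))
    (hPS : θPS = (1 / (1 - μ)) • μ₀)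
    (Z : ℕ → Ω → EuclideanSpace ℝ (Fin d))
    (hZL2 : ∀ i, MemLp (Z i) 2 (volume : Measure Ω))
    (hZmean : ∀ i, ∫ ω, Z i ω = 0)
    (hZvar : ∀ i, ∫ ω, ‖Z i ω‖ ^ 2 = d * σ₀ ^ 2 / N)
    (hZuncorr : ∀ i j, i ≠ j → ∫ ω, (@inner ℝ _ _ (Z i ω) (Z j ω)) = 0)
    (θ : ℕ → Ω → EuclideanSpace ℝ (Fin d))
    (hinit : ∀ ω, θ 0 ω = 0)
    (hrec : ∀ t ω, θ (t + 1) ω = μ₀ + μ • θ t ω + Z (t + 1) ω) (T : ℕ) :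
    ∫ ω, ‖θ T ω - θPS‖ ^ 2
      = ‖μ₀‖ ^ 2 * μ ^ (2 * T) / (1 - μ) ^ 2
        + (d * σ₀ ^ 2 / N) * ((1 - μ ^ (2 * T)) / (1 - μ ^ 2)) := by
  have h1μ : 1 - μ ≠ 0 := by linarith
  have hμ2 : μ ^ 2 ≠ 1 := by nlinarith
  have hfix : μ₀ + μ • θPS = θPS := by
    rw [hPS, smul_smul]
    match_scalars
    field_simp
    ring
  have hunroll : ∀ ω, θ T ω - θPS = μ ^ T • (-θPS) + ∑ j ∈ range T, μ ^ j • Z (T - j) ω :=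
    fun ω => by
      simpa [hinit] using affine_recursion_sub_fixedPoint μ hfix (x := fun t => θ t ω)
        (z := fun t => Z t ω) (hrec · ω) T
  have hgeom : ∑ j ∈ range T, (μ ^ 2) ^ j = (1 - μ ^ (2 * T)) / (1 - μ ^ 2) := by
    rw [geom_sum_eq hμ2, ← pow_mul, ← neg_div_neg_eq, neg_sub, neg_sub]
  calc ∫ ω, ‖θ T ω - θPS‖ ^ 2
      = ‖μ ^ T • (-θPS)‖ ^ 2 + ∑ j ∈ range T, (μ ^ j) ^ 2 * ∫ ω, ‖Z (T - j) ω‖ ^ 2 := by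
        simp_rw [hunroll]
        refine integral_norm_sq_const_add_sum_smul _ _ _ (fun j _ => hZL2 _) (fun j _ => hZmean _)
          fun j hj k hk hjk => hZuncorr _ _ ?_
        simp only [mem_range] at hj hk
        omega
    _ = ‖μ ^ T • (-θPS)‖ ^ 2 + (∑ j ∈ range T, (μ ^ 2) ^ j) * (d * σ₀ ^ 2 / N) := by
        rw [sum_mul]
        refine congrArg _ (sum_congr rfl fun j _ => ?_)
        rw [hZvar]
        ring
    _ = _ := by
        simp only [hgeom, hPS, norm_neg, norm_smul, Real.norm_eq_abs, mul_pow, sq_abs, pow_mul]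
        field_simp
        ring

/-- Repeated ERM under the Gaussian mean-shift model with `θ₀ = 0` and constant sample
size `N`: `E‖θ_T - θ_PS‖² = ‖μ₀‖² μ^{2T}/(1-μ)² + (dσ₀²/N)(1-μ^{2T})/(1-μ²)`. The
Gaussian noise is abstracted by its first and second moments (mean zero, uncorrelated
across rounds, `E‖Z_t‖² = dσ₀²/N`). -/
theorem stmt10 {Ω : Type*} [MeasureSpace Ω] [IsProbabilityMeasure (volume : Measure Ω)]
    {d : ℕ} (μ σ₀ : ℝ) (h0μ : 0 ≤ μ) (hμ : μ < 1) (hσ₀ : 0 < σ₀)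
    (N : ℕ) (hN : 0 < N)
    (μ₀ θPS : EuclideanSpace ℝ (Fin d))
    (hPS : θPS = (1 / (1 - μ)) • μ₀)
    (Z : ℕ → Ω → EuclideanSpace ℝ (Fin d))
    (hZL2 : ∀ i, MemLp (Z i) 2 (volume : Measure Ω))
    (hZmean : ∀ i, ∫ ω, Z i ω = 0)
    (hZvar : ∀ i, ∫ ω, ‖Z i ω‖ ^ 2 = d * σ₀ ^ 2 / N)
    (hZuncorr : ∀ i j, i ≠ j → ∫ ω, (@inner ℝ _ _ (Z i ω) (Z j ω)) = 0)
    (θ : ℕ → Ω → EuclideanSpace ℝ (Fin d))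
    (hinit : ∀ ω, θ 0 ω = 0)
    (hrec : ∀ t ω, θ (t + 1) ω = μ₀ + μ • θ t ω + Z (t + 1) ω) (T : ℕ) :
    ∫ ω, ‖θ T ω - θPS‖ ^ 2
      = ‖μ₀‖ ^ 2 * μ ^ (2 * T) / (1 - μ) ^ 2
        + (d * σ₀ ^ 2 / N) * ((1 - μ ^ (2 * T)) / (1 - μ ^ 2)) :=
  stmt10_general μ σ₀ h0μ hμ N μ₀ θPS hPS Z hZL2 hZmean hZvar hZuncorr θ hinit hrec T
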